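/- (Burns–Krantz rigidity, nontangential version.) Assume that a Schur function s satisfies s(z) = z + O((1-z)^4) as z tends nontangentially to 1. Then s(z) = z for all z in the open unit disk. -/

import Mathlib

/-!
Along the radius, `s r = r + o((1 - r) ^ 3)`. So `s` has the boundary value `1` at `1` with angular
derivative `1`, and Julia's lemma gives `‖1 - s z‖² (1 - ‖z‖²) ≤ (1 - ‖s z‖²) ‖1 - z‖²`, which says
precisely that `q = (1 + s) / (1 - s) - (1 + z) / (1 - z)` has nonnegative real part. Moreover
`q r = 2 (s r - r) / ((1 - s r) (1 - r)) = o(1 - r)`. Hence `σ = (q - 1) / (q + 1)` is a Schur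
function with `σ r → -1` and angular derivative `0` there, and Julia's lemma with angular
derivative `0` forces `σ ≡ -1`, that is `q ≡ 0`, that is `s z = z`.
-/

noncomputable section

open Complex Filter

/-- The open unit disk in the complex plane. -/
def unitDisk : Set ℂ := {z : ℂ | ‖z‖ < 1}

/-- A Schur function: analytic on the open unit disk and bounded by one in modulus there. -/
def SchurFunction (f : ℂ → ℂ) : Prop :=
  DifferentiableOn ℂ f unitDisk ∧ ∀ z ∈ unitDisk, ‖f z‖ ≤ 1

/-- The Stolz region with parameter `K` at the boundary point `1`. -/
def stolzRegion (K : ℝ) : Set ℂ :=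
  {z : ℂ | ‖z‖ < 1 ∧ ‖z - 1‖ < K * (1 - ‖z‖)}

/-- `f(z) = O((z-1)^m)` as `z` tends nontangentially to `1`:
`(z-1)^{-m} f(z)` stays bounded as `z → 1` within each Stolz region. -/
def NTBigO (f : ℂ → ℂ) (m : ℕ) : Prop :=
  ∀ K > (1 : ℝ), f =O[nhdsWithin 1 (stolzRegion K)] fun z => (z - 1) ^ m

open Metric Set Topology Asymptotics ComplexConjugate

lemma unitDisk_eq_ball : unitDisk = ball (0 : ℂ) 1 := by
  ext z
  simp [unitDisk]

lemma isOpen_unitDisk : IsOpen unitDisk :=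
  unitDisk_eq_ball ▸ isOpen_ball

lemma isPreconnected_unitDisk : IsPreconnected unitDisk :=
  unitDisk_eq_ball ▸ (convex_ball _ _).isPreconnected

lemma ne_one_of_mem_unitDisk {z : ℂ} (hz : z ∈ unitDisk) : z ≠ 1 := by
  rintro rfl
  simp [unitDisk] at hz

lemma one_sub_conj_mul_ne_zero {a z : ℂ} (ha : ‖a‖ < 1) (hz : ‖z‖ ≤ 1) :
    1 - conj a * z ≠ 0 := by
  intro h
  have h1 : ‖conj a * z‖ = 1 := by rw [← sub_eq_zero.mp h, norm_one]
  rw [norm_mul, norm_conj] at h1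
  nlinarith [norm_nonneg a, norm_nonneg z]

lemma norm_one_sub_conj_mul_sq (u v : ℂ) :
    ‖1 - conj u * v‖ ^ 2 = ‖u - v‖ ^ 2 + (1 - ‖u‖ ^ 2) * (1 - ‖v‖ ^ 2) := by
  simp only [← normSq_eq_norm_sq, normSq_apply, sub_re, sub_im, mul_re, mul_im, one_re, one_im,
    conj_re, conj_im]
  ring

def diskMobius (a z : ℂ) : ℂ := (a - z) / (1 - conj a * z)

section diskMobius

variable {a z : ℂ}

@[simp] lemma diskMobius_self (a : ℂ) : diskMobius a a = 0 := by simp [diskMobius]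

@[simp] lemma diskMobius_zero (a : ℂ) : diskMobius a 0 = a := by simp [diskMobius]

lemma one_sub_norm_diskMobius_sq (ha : ‖a‖ < 1) (hz : ‖z‖ ≤ 1) :
    1 - ‖diskMobius a z‖ ^ 2 = (1 - ‖a‖ ^ 2) * (1 - ‖z‖ ^ 2) / ‖1 - conj a * z‖ ^ 2 := by
  have hd : ‖1 - conj a * z‖ ^ 2 ≠ 0 := by simpa using one_sub_conj_mul_ne_zero ha hz
  rw [diskMobius, norm_div, div_pow, eq_div_iff hd, sub_mul, div_mul_cancel₀ _ hd,
    norm_one_sub_conj_mul_sq]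
  ring

lemma norm_diskMobius_lt_one (ha : ‖a‖ < 1) (hz : ‖z‖ < 1) : ‖diskMobius a z‖ < 1 := by
  have h := one_sub_norm_diskMobius_sq ha hz.le
  have hpos : 0 < (1 - ‖a‖ ^ 2) * (1 - ‖z‖ ^ 2) / ‖1 - conj a * z‖ ^ 2 := by
    have := one_sub_conj_mul_ne_zero ha hz.le
    have : ‖a‖ ^ 2 < 1 := by nlinarith [norm_nonneg a]
    have : ‖z‖ ^ 2 < 1 := by nlinarith [norm_nonneg z]
    apply div_pos <;> [apply mul_pos; positivity] <;> linarith
  nlinarith [norm_nonneg (diskMobius a z)]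

lemma mapsTo_diskMobius (ha : ‖a‖ < 1) : MapsTo (diskMobius a) unitDisk unitDisk :=
  fun _ hz => norm_diskMobius_lt_one ha hz

lemma diskMobius_diskMobius (ha : ‖a‖ < 1) (hz : ‖z‖ < 1) :
    diskMobius a (diskMobius a z) = z := by
  have h₁ := one_sub_conj_mul_ne_zero ha hz.le
  have h₂ := one_sub_conj_mul_ne_zero ha (norm_diskMobius_lt_one ha hz).le
  rw [diskMobius, div_eq_iff h₂, diskMobius]
  linear_combination -(div_mul_cancel₀ (a - z) h₁)

lemma differentiableOn_diskMobius (ha : ‖a‖ < 1) :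
    DifferentiableOn ℂ (diskMobius a) unitDisk :=
  ((differentiableOn_const a).sub differentiableOn_id).div
    ((differentiableOn_const 1).sub (differentiableOn_id.const_mul _))
    fun _ hz => one_sub_conj_mul_ne_zero ha (le_of_lt hz)

end diskMobius

section SchwarzPick

variable {f : ℂ → ℂ} {z w : ℂ}

/-- The Schwarz–Pick lemma, for the pseudo-hyperbolic distance `‖diskMobius w z‖`. -/
theorem norm_diskMobius_le_of_mapsTo (hd : DifferentiableOn ℂ f unitDisk)
    (hm : MapsTo f unitDisk unitDisk) (hz : z ∈ unitDisk) (hw : w ∈ unitDisk) :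
    ‖diskMobius (f w) (f z)‖ ≤ ‖diskMobius w z‖ := by
  set g := diskMobius (f w) ∘ f ∘ diskMobius w
  have hgd : DifferentiableOn ℂ g (ball 0 1) := unitDisk_eq_ball ▸
    (differentiableOn_diskMobius (hm hw)).comp (hd.comp (differentiableOn_diskMobius hw)
      (mapsTo_diskMobius hw)) (hm.comp (mapsTo_diskMobius hw))
  have hgm : MapsTo g (ball 0 1) (closedBall 0 1) := by
    rw [← unitDisk_eq_ball]
    exact ((mapsTo_diskMobius (hm hw)).comp (hm.comp (mapsTo_diskMobius hw))).mono_right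
      (unitDisk_eq_ball ▸ ball_subset_closedBall)
  have hg0 : g 0 = 0 := by simp [g]
  have h := Complex.norm_le_norm_of_mapsTo_ball hgd hgm hg0 (norm_diskMobius_lt_one hw hz)
  simpa [g, diskMobius_diskMobius hw hz] using h

lemma SchurFunction.mapsTo_or_eqOn_const (hf : SchurFunction f) :
    MapsTo f unitDisk unitDisk ∨ ∃ c : ℂ, ‖c‖ = 1 ∧ EqOn f (fun _ => c) unitDisk := by
  by_cases h : ∃ z₀ ∈ unitDisk, ‖f z₀‖ = 1
  · obtain ⟨z₀, hz₀, h₁⟩ := h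
    refine .inr ⟨f z₀, h₁, Complex.eqOn_of_isPreconnected_of_isMaxOn_norm isPreconnected_unitDisk
      isOpen_unitDisk hf.1 hz₀ fun z hz => ?_⟩
    simpa [h₁] using hf.2 z hz
  · push Not at h
    exact .inl fun z hz => lt_of_le_of_ne (hf.2 z hz) (h z hz)

/-- Cleared of denominators, Schwarz–Pick also holds for the unimodular constants, where both
sides vanish. -/
theorem SchurFunction.schwarz_pick (hf : SchurFunction f) (hz : z ∈ unitDisk)
    (hw : w ∈ unitDisk) :
    ‖1 - conj (f w) * f z‖ ^ 2 * ((1 - ‖w‖ ^ 2) * (1 - ‖z‖ ^ 2))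
      ≤ (1 - ‖f w‖ ^ 2) * (1 - ‖f z‖ ^ 2) * ‖1 - conj w * z‖ ^ 2 := by
  rcases hf.mapsTo_or_eqOn_const with hm | ⟨c, hc, hfc⟩
  · have h := norm_diskMobius_le_of_mapsTo hf.1 hm hz hw
    have hsq : 1 - ‖diskMobius w z‖ ^ 2 ≤ 1 - ‖diskMobius (f w) (f z)‖ ^ 2 := by
      have := norm_nonneg (diskMobius (f w) (f z))
      nlinarith
    rw [one_sub_norm_diskMobius_sq hw hz.le, one_sub_norm_diskMobius_sq (hm hw) (hm hz).le,
      div_le_div_iff₀] at hsq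
    · linarith
    · exact pow_pos (norm_pos_iff.2 (one_sub_conj_mul_ne_zero hw hz.le)) 2
    · exact pow_pos (norm_pos_iff.2 (one_sub_conj_mul_ne_zero (hm hw) (hm hz).le)) 2
  · simp [hfc hz, hfc hw, conj_mul', hc]

end SchwarzPick

lemma eventually_mem_Ioo_nhdsLT_one : ∀ᶠ r : ℝ in 𝓝[<] 1, r ∈ Ioo 0 1 :=
  Ioo_mem_nhdsLT one_pos

lemma norm_ofReal_of_mem_Ioo {r : ℝ} (hr : r ∈ Ioo 0 1) : ‖(r : ℂ)‖ = r := by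
  simp [abs_of_pos hr.1]

lemma norm_one_sub_ofReal_of_mem_Ioo {r : ℝ} (hr : r ∈ Ioo 0 1) : ‖1 - (r : ℂ)‖ = 1 - r := by
  rw [← ofReal_one, ← ofReal_sub, norm_real, Real.norm_of_nonneg (by linarith [hr.2])]

lemma ofReal_mem_unitDisk {r : ℝ} (hr : r ∈ Ioo 0 1) : (r : ℂ) ∈ unitDisk :=
  (norm_ofReal_of_mem_Ioo hr).trans_lt hr.2

lemma tendsto_ofReal_nhdsLT_one : Tendsto (fun r : ℝ => (r : ℂ)) (𝓝[<] 1) (𝓝 1) := by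
  simpa using (continuous_ofReal.tendsto 1).mono_left nhdsWithin_le_nhds

lemma tendsto_one_sub_nhdsLT_one : Tendsto (fun r : ℝ => 1 - r) (𝓝[<] 1) (𝓝 0) := by
  simpa using ((continuous_sub_left 1).tendsto (1 : ℝ)).mono_left nhdsWithin_le_nhds

lemma isLittleO_one_sub_pow_nhdsLT_one {n : ℕ} (hn : 1 < n) :
    (fun r : ℝ => (1 - r) ^ n) =o[𝓝[<] 1] (fun r => 1 - r) :=
  (isLittleO_pow_id hn).comp_tendsto tendsto_one_sub_nhdsLT_one

lemma tendsto_ofReal_nhdsWithin_stolzRegion {K : ℝ} (hK : 1 < K) :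
    Tendsto (fun r : ℝ => (r : ℂ)) (𝓝[<] 1) (𝓝[stolzRegion K] 1) := by
  refine tendsto_nhdsWithin_iff.2 ⟨tendsto_ofReal_nhdsLT_one, ?_⟩
  filter_upwards [eventually_mem_Ioo_nhdsLT_one] with r hr
  refine ⟨ofReal_mem_unitDisk hr, ?_⟩
  rw [norm_sub_rev, norm_one_sub_ofReal_of_mem_Ioo hr, norm_ofReal_of_mem_Ioo hr]
  nlinarith [hr.2]

lemma isLittleO_radial_of_ntBigO {f : ℂ → ℂ} {m : ℕ} (hf : NTBigO f (m + 1)) :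
    (fun r : ℝ => f r) =o[𝓝[<] 1] (fun r => (1 - r) ^ m) := by
  have h := (hf 2 one_lt_two).comp_tendsto (tendsto_ofReal_nhdsWithin_stolzRegion one_lt_two)
  refine (h.trans (isBigO_of_le _ fun r => le_of_eq ?_)).trans_isLittleO
    ((isLittleO_pow_pow (Nat.lt_succ_self m)).comp_tendsto tendsto_one_sub_nhdsLT_one)
  simp [← ofReal_one, ← ofReal_sub, abs_sub_comm]

lemma tendsto_one_sub_sq_div_one_sub_sq {x : ℝ → ℝ} {α : ℝ}
    (hx : (fun r => (1 - x r) - α * (1 - r)) =o[𝓝[<] 1] (fun r => 1 - r)) :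
    Tendsto (fun r => (1 - x r ^ 2) / (1 - r ^ 2)) (𝓝[<] 1) (𝓝 α) := by
  have hquot : Tendsto (fun r => (1 - x r) / (1 - r)) (𝓝[<] 1) (𝓝 α) := by
    have h := hx.tendsto_div_nhds_zero.add_const α
    rw [zero_add] at h
    refine h.congr' ?_
    filter_upwards [eventually_mem_Ioo_nhdsLT_one] with r hr
    have : 1 - r ≠ 0 := by linarith [hr.2]
    field_simp
    ring
  have hx1 : Tendsto x (𝓝[<] 1) (𝓝 1) := by
    have h := (hquot.mul tendsto_one_sub_nhdsLT_one).const_sub 1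
    simp only [mul_zero, sub_zero] at h
    refine h.congr' ?_
    filter_upwards [eventually_mem_Ioo_nhdsLT_one] with r hr
    have : 1 - r ≠ 0 := by linarith [hr.2]
    field_simp
    ring
  have hplus : Tendsto (fun r => (1 + x r) / (1 + r)) (𝓝[<] 1) (𝓝 1) := by
    have h := (hx1.const_add 1).div ((tendsto_nhdsWithin_of_tendsto_nhds tendsto_id).const_add 1)
      (by norm_num : (1 : ℝ) + 1 ≠ 0)
    rwa [div_self (by norm_num : (1 : ℝ) + 1 ≠ 0)] at h
  have h := hquot.mul hplus
  rw [mul_one] at h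
  refine h.congr fun r => ?_
  rw [div_mul_div_comm]
  ring

theorem SchurFunction.julia {f : ℂ → ℂ} (hf : SchurFunction f) {w₀ : ℂ} {α : ℝ}
    (hw₀ : Tendsto (fun r : ℝ => f r) (𝓝[<] 1) (𝓝 w₀))
    (hα : Tendsto (fun r : ℝ => (1 - ‖f r‖ ^ 2) / (1 - r ^ 2)) (𝓝[<] 1) (𝓝 α))
    {z : ℂ} (hz : z ∈ unitDisk) :
    ‖1 - conj w₀ * f z‖ ^ 2 * (1 - ‖z‖ ^ 2) ≤ α * ((1 - ‖f z‖ ^ 2) * ‖1 - z‖ ^ 2) := by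
  have hleft : Tendsto (fun r : ℝ => ‖1 - conj (f r) * f z‖ ^ 2 * (1 - ‖z‖ ^ 2)) (𝓝[<] 1)
      (𝓝 (‖1 - conj w₀ * f z‖ ^ 2 * (1 - ‖z‖ ^ 2))) :=
    ((by fun_prop : Continuous fun w : ℂ => ‖1 - conj w * f z‖ ^ 2 * (1 - ‖z‖ ^ 2)).tendsto
      w₀).comp hw₀
  have hright : Tendsto (fun r : ℝ => (1 - ‖f r‖ ^ 2) / (1 - r ^ 2) *
      ((1 - ‖f z‖ ^ 2) * ‖1 - r * z‖ ^ 2)) (𝓝[<] 1)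
      (𝓝 (α * ((1 - ‖f z‖ ^ 2) * ‖1 - z‖ ^ 2))) :=
    hα.mul <| ((by fun_prop : Continuous fun w : ℂ => (1 - ‖f z‖ ^ 2) * ‖1 - w * z‖ ^ 2).tendsto'
      1 _ (by simp)).comp tendsto_ofReal_nhdsLT_one
  refine le_of_tendsto_of_tendsto hleft hright ?_
  filter_upwards [eventually_mem_Ioo_nhdsLT_one] with r hr
  have hpick := hf.schwarz_pick hz (ofReal_mem_unitDisk hr)
  rw [norm_ofReal_of_mem_Ioo hr, conj_ofReal] at hpick
  have hr2 : 0 < 1 - r ^ 2 := by nlinarith [hr.1, hr.2]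
  rw [div_mul_eq_mul_div, le_div_iff₀ hr2]
  linarith

lemma re_one_add_div_one_sub (w : ℂ) :
    ((1 + w) / (1 - w)).re = (1 - ‖w‖ ^ 2) / ‖1 - w‖ ^ 2 := by
  simp only [div_re, ← normSq_eq_norm_sq, normSq_apply, add_re, add_im, sub_re, sub_im, one_re,
    one_im]
  ring

section RightHalfPlane

variable {w : ℂ}

lemma one_le_norm_add_one (hw : 0 ≤ w.re) : 1 ≤ ‖w + 1‖ := by
  have h := re_le_norm (w + 1)
  rw [add_re, one_re] at h
  linarith

lemma norm_sub_one_le_norm_add_one (hw : 0 ≤ w.re) : ‖w - 1‖ ≤ ‖w + 1‖ := by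
  have h : ‖w + 1‖ ^ 2 - ‖w - 1‖ ^ 2 = 4 * w.re := by
    simp only [← normSq_eq_norm_sq, normSq_apply, add_re, add_im, sub_re, sub_im, one_re, one_im]
    ring
  nlinarith [norm_nonneg (w - 1), norm_nonneg (w + 1)]

lemma norm_div_add_one_add_one_le (hw : 0 ≤ w.re) : ‖(w - 1) / (w + 1) + 1‖ ≤ 2 * ‖w‖ := by
  have h1 := one_le_norm_add_one hw
  have hne : w + 1 ≠ 0 := norm_pos_iff.1 (by linarith)
  rw [div_add_one hne, show w - 1 + (w + 1) = 2 * w by ring, norm_div, norm_mul, Complex.norm_two]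
  exact div_le_self (by positivity) h1

end RightHalfPlane

/-- Via the Cayley transform `(q - 1) / (q + 1)`, this is Julia's lemma with angular
derivative `0`. -/
theorem eqOn_zero_of_re_nonneg_of_isLittleO {q : ℂ → ℂ} (hd : DifferentiableOn ℂ q unitDisk)
    (hre : ∀ z ∈ unitDisk, 0 ≤ (q z).re)
    (hq : (fun r : ℝ => q r) =o[𝓝[<] 1] (fun r => 1 - r)) : EqOn q 0 unitDisk := by
  set σ : ℂ → ℂ := fun z => (q z - 1) / (q z + 1)
  have hq1 : ∀ z ∈ unitDisk, q z + 1 ≠ 0 := fun z hz h =>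
    absurd (one_le_norm_add_one (hre z hz)) (by norm_num [h])
  have hσ : SchurFunction σ := by
    refine ⟨(hd.sub_const 1).div (hd.add_const 1) hq1, fun z hz => ?_⟩
    rw [norm_div, div_le_one (norm_pos_iff.2 (hq1 z hz))]
    exact norm_sub_one_le_norm_add_one (hre z hz)
  have hσq : ∀ᶠ r : ℝ in 𝓝[<] 1, ‖σ r + 1‖ ≤ 2 * ‖q r‖ := by
    filter_upwards [eventually_mem_Ioo_nhdsLT_one] with r hr
    exact norm_div_add_one_add_one_le (hre r (ofReal_mem_unitDisk hr))
  have hσ₁ : Tendsto (fun r : ℝ => σ r) (𝓝[<] 1) (𝓝 (-1)) := by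
    have h : Tendsto (fun r : ℝ => σ r + 1) (𝓝[<] 1) (𝓝 0) := by
      refine squeeze_zero_norm' hσq ?_
      simpa using ((hq.trans_tendsto tendsto_one_sub_nhdsLT_one).norm.const_mul 2)
    simpa using h.sub_const 1
  have hα : Tendsto (fun r : ℝ => (1 - ‖σ r‖ ^ 2) / (1 - r ^ 2)) (𝓝[<] 1) (𝓝 0) := by
    refine tendsto_one_sub_sq_div_one_sub_sq (IsBigO.trans_isLittleO (IsBigO.of_bound 2 ?_) hq)
    filter_upwards [hσq, eventually_mem_Ioo_nhdsLT_one] with r h hr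
    have h1 := hσ.2 _ (ofReal_mem_unitDisk hr)
    have h2 := norm_sub_norm_le (1 : ℂ) (-σ r)
    rw [norm_one, norm_neg, sub_neg_eq_add, add_comm] at h2
    rw [zero_mul, sub_zero, Real.norm_of_nonneg (by linarith)]
    linarith
  intro z hz
  have hj := hσ.julia hσ₁ hα hz
  have hz2 : 0 < 1 - ‖z‖ ^ 2 := by nlinarith [norm_nonneg z, show ‖z‖ < 1 from hz]
  have hσz : σ z + 1 = 0 := by
    rw [zero_mul, map_neg, map_one, neg_one_mul, sub_neg_eq_add, add_comm] at hj
    exact norm_eq_zero.1 (pow_eq_zero_iff two_ne_zero |>.1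
      (le_antisymm (nonpos_of_mul_nonpos_left hj hz2) (by positivity)))
  rw [div_add_one (hq1 z hz), div_eq_zero_iff, or_iff_left (hq1 z hz)] at hσz
  show q z = 0
  linear_combination hσz / 2

section RadialContact

variable {s : ℂ → ℂ}

lemma tendsto_of_isLittleO_one_sub
    (hrad : (fun r : ℝ => s r - r) =o[𝓝[<] 1] (fun r => 1 - r)) :
    Tendsto (fun r : ℝ => s r) (𝓝[<] 1) (𝓝 1) := by
  simpa using (hrad.trans_tendsto tendsto_one_sub_nhdsLT_one).add tendsto_ofReal_nhdsLT_one

lemma SchurFunction.mapsTo_of_isLittleO (hs : SchurFunction s)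
    (hrad : (fun r : ℝ => s r - r) =o[𝓝[<] 1] (fun r => 1 - r)) :
    MapsTo s unitDisk unitDisk := by
  rcases hs.mapsTo_or_eqOn_const with hm | ⟨c, -, hc⟩
  · exact hm
  have hev : ∀ᶠ r : ℝ in 𝓝[<] 1, s r = c :=
    eventually_mem_Ioo_nhdsLT_one.mono fun r hr => hc (ofReal_mem_unitDisk hr)
  have hc1 : c = 1 := tendsto_nhds_unique
    (tendsto_const_nhds.congr' (hev.mono fun r h => h.symm)) (tendsto_of_isLittleO_one_sub hrad)
  obtain ⟨r, hr, hsr, hbound⟩ :=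
    (eventually_mem_Ioo_nhdsLT_one.and (hev.and (hrad.def one_half_pos))).exists
  rw [hsr, hc1, norm_one_sub_ofReal_of_mem_Ioo hr, Real.norm_of_nonneg (by linarith [hr.2])]
    at hbound
  linarith [hr.2]

lemma SchurFunction.julia_at_one (hs : SchurFunction s)
    (hrad : (fun r : ℝ => s r - r) =o[𝓝[<] 1] (fun r => 1 - r)) {z : ℂ} (hz : z ∈ unitDisk) :
    ‖1 - s z‖ ^ 2 * (1 - ‖z‖ ^ 2) ≤ (1 - ‖s z‖ ^ 2) * ‖1 - z‖ ^ 2 := by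
  have hα : Tendsto (fun r : ℝ => (1 - ‖s r‖ ^ 2) / (1 - r ^ 2)) (𝓝[<] 1) (𝓝 1) := by
    refine tendsto_one_sub_sq_div_one_sub_sq (IsBigO.trans_isLittleO (IsBigO.of_bound 1 ?_) hrad)
    filter_upwards [eventually_mem_Ioo_nhdsLT_one] with r hr
    have h := abs_norm_sub_norm_le (s r) (r : ℂ)
    rw [norm_ofReal_of_mem_Ioo hr] at h
    rwa [one_mul, one_mul, Real.norm_eq_abs, show 1 - ‖s r‖ - (1 - r) = -(‖s r‖ - r) by ring,
      abs_neg]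
  simpa using hs.julia (tendsto_of_isLittleO_one_sub hrad) hα hz

def cayleyDefect (s : ℂ → ℂ) (z : ℂ) : ℂ := (1 + s z) / (1 - s z) - (1 + z) / (1 - z)

lemma cayleyDefect_eq {z : ℂ} (hs : s z ≠ 1) (hz : z ≠ 1) :
    cayleyDefect s z = 2 * (s z - z) / ((1 - s z) * (1 - z)) := by
  rw [cayleyDefect, div_sub_div _ _ (sub_ne_zero.2 hs.symm) (sub_ne_zero.2 hz.symm)]
  ring

lemma cayleyDefect_eq_zero_iff {z : ℂ} (hs : s z ≠ 1) (hz : z ≠ 1) :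
    cayleyDefect s z = 0 ↔ s z = z := by
  rw [cayleyDefect_eq hs hz, div_eq_zero_iff, or_iff_left (mul_ne_zero (sub_ne_zero.2 hs.symm)
    (sub_ne_zero.2 hz.symm)), mul_eq_zero, or_iff_right two_ne_zero, sub_eq_zero]

lemma differentiableOn_cayleyDefect (hd : DifferentiableOn ℂ s unitDisk)
    (hm : MapsTo s unitDisk unitDisk) : DifferentiableOn ℂ (cayleyDefect s) unitDisk :=
  ((hd.const_add 1).div (hd.const_sub 1) fun _ hz => sub_ne_zero.2 (ne_one_of_mem_unitDisk
    (hm hz)).symm).sub ((differentiableOn_id.const_add 1).div (differentiableOn_id.const_sub 1)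
    fun _ hz => sub_ne_zero.2 (ne_one_of_mem_unitDisk hz).symm)

lemma SchurFunction.re_cayleyDefect_nonneg (hs : SchurFunction s)
    (hrad : (fun r : ℝ => s r - r) =o[𝓝[<] 1] (fun r => 1 - r)) {z : ℂ} (hz : z ∈ unitDisk) :
    0 ≤ (cayleyDefect s z).re := by
  have hsz := (hs.mapsTo_of_isLittleO hrad) hz
  rw [cayleyDefect, sub_re, re_one_add_div_one_sub, re_one_add_div_one_sub, sub_nonneg,
    div_le_div_iff₀]
  · linarith [hs.julia_at_one hrad hz]
  · exact pow_pos (norm_pos_iff.2 (sub_ne_zero.2 (ne_one_of_mem_unitDisk hz).symm)) 2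
  · exact pow_pos (norm_pos_iff.2 (sub_ne_zero.2 (ne_one_of_mem_unitDisk hsz).symm)) 2

lemma isLittleO_cayleyDefect
    (hrad : (fun r : ℝ => s r - r) =o[𝓝[<] 1] (fun r => (1 - r) ^ 3)) :
    (fun r : ℝ => cayleyDefect s r) =o[𝓝[<] 1] (fun r => 1 - r) := by
  have hrad₁ : (fun r : ℝ => s r - r) =o[𝓝[<] 1] (fun r => 1 - r) :=
    hrad.trans (isLittleO_one_sub_pow_nhdsLT_one (by norm_num))
  refine IsLittleO.of_bound fun c hc => ?_
  filter_upwards [hrad.def (by positivity : 0 < c / 4), hrad₁.def one_half_pos,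
    eventually_mem_Ioo_nhdsLT_one] with r h₃ h₁ hr
  have h1r : 0 < 1 - r := by linarith [hr.2]
  rw [Real.norm_of_nonneg h1r.le] at h₁ ⊢
  rw [norm_pow, Real.norm_of_nonneg h1r.le] at h₃
  have hlow : (1 - r) / 2 ≤ ‖1 - s r‖ := by
    have h := norm_sub_norm_le (1 - (r : ℂ)) (s r - r)
    rw [norm_one_sub_ofReal_of_mem_Ioo hr, sub_sub_sub_cancel_right] at h
    linarith
  have hs1 : s r ≠ 1 := fun h => by
    rw [h, sub_self, norm_zero] at hlow
    linarith
  rw [cayleyDefect_eq hs1 (ne_one_of_mem_unitDisk (ofReal_mem_unitDisk hr)), norm_div, norm_mul,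
    norm_mul, Complex.norm_two, norm_one_sub_ofReal_of_mem_Ioo hr,
    div_le_iff₀ (mul_pos ((half_pos h1r).trans_le hlow) h1r)]
  calc 2 * ‖s r - r‖ ≤ c * (1 - r) * ((1 - r) / 2 * (1 - r)) := by nlinarith
    _ ≤ c * (1 - r) * (‖1 - s r‖ * (1 - r)) := by gcongr

end RadialContact

/-- Burns–Krantz rigidity theorem, nontangential version. -/
theorem burns_krantz (s : ℂ → ℂ) (hs : SchurFunction s)
    (hO : NTBigO (fun z => s z - z) 4) :
    ∀ z ∈ unitDisk, s z = z := by
  have hrad₃ : (fun r : ℝ => s r - r) =o[𝓝[<] 1] (fun r => (1 - r) ^ 3) :=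
    isLittleO_radial_of_ntBigO hO
  have hrad₁ : (fun r : ℝ => s r - r) =o[𝓝[<] 1] (fun r => 1 - r) :=
    hrad₃.trans (isLittleO_one_sub_pow_nhdsLT_one (by norm_num))
  have hm := hs.mapsTo_of_isLittleO hrad₁
  have hq := eqOn_zero_of_re_nonneg_of_isLittleO (differentiableOn_cayleyDefect hs.1 hm)
    (fun z hz => hs.re_cayleyDefect_nonneg hrad₁ hz) (isLittleO_cayleyDefect hrad₃)
  intro z hz
  exact (cayleyDefect_eq_zero_iff (ne_one_of_mem_unitDisk (hm hz))
    (ne_one_of_mem_unitDisk hz)).1 (hq hz)
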